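/- arXiv:2304.13205 — 3 statements merged into one kernel-verified Lean document; each statement's English description precedes it below -/
import Mathlib

section
/- Let 0 < α < 1, T > 0, and let f : ℝ → ℝ be twice continuously differentiable on [0, T]. Then there exists a constant C ≥ 0 (depending only on α and f) such that for every step size Δt > 0 and every integer j ≥ 1 with jΔt ≤ T, the L1 approximation of the Caputo derivative satisfies |δ_t^α f^j − D^α f(t^j)| ≤ C Δt^{2−α}, where t^j = jΔt. -/
open MeasureTheory Real Finset

/-- The Caputo fractional derivative of order `α` of `f` at `t`:
`D^α f(t) = (1/Γ(1−α)) ∫₀^t (t−s)^{−α} f′(s) ds`. -/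
noncomputable def caputoDeriv (α : ℝ) (f : ℝ → ℝ) (t : ℝ) : ℝ :=
  (1 / Real.Gamma (1 - α)) * ∫ s in (0:ℝ)..t, (t - s) ^ (-α) * deriv f s

/-- The L1 approximation of the Caputo derivative of order `α` on the uniform mesh
`t^j = j·Δt`:
`δ_t^α f^j = Σ_{k=0}^{j−1} b_k^α (f(t^{j−k}) − f(t^{j−1−k}))`,
with `b_k^α = (Δt^{−α}/Γ(2−α))((k+1)^{1−α} − k^{1−α})`. -/
noncomputable def l1Approx (α Δt : ℝ) (f : ℝ → ℝ) (j : ℕ) : ℝ :=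
  ∑ k ∈ Finset.range j,
    (Δt ^ (-α) / Real.Gamma (2 - α)) * (((k : ℝ) + 1) ^ (1 - α) - (k : ℝ) ^ (1 - α)) *
      (f (((j : ℝ) - k) * Δt) - f (((j : ℝ) - 1 - k) * Δt))

section L1Helpers
open intervalIntegral

lemma rpow_diff_eq_integral {α d u : ℝ} (hα : 0 < α) (hd : 0 < d) (hdu : d ≤ u) :
    d ^ (-α) - u ^ (-α) = ∫ x in d..u, α * x ^ (-1 - α) := by
  rw [intervalIntegral.integral_const_mul,
    integral_rpow (Or.inr ⟨by linarith, fun h => by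
      rcases Set.mem_uIcc.1 h with ⟨h1,_⟩|⟨_,h2⟩ <;> linarith⟩)]
  have : -1 - α + 1 = -α := by ring
  rw [this]
  field_simp
  ring_nf

lemma cont_rpow_aux {α d u : ℝ} (hd : 0 < d) (hdu : d ≤ u) :
    IntervalIntegrable (fun x : ℝ => α * x ^ (-1 - α)) volume d u := by
  apply ContinuousOn.intervalIntegrable
  apply ContinuousOn.mul continuousOn_const
  intro x hx
  rw [Set.uIcc_of_le hdu] at hx
  exact (Real.continuousAt_rpow_const x _ (Or.inl (by intro h; rw [h] at hx; linarith [hx.1]))).continuousWithinAt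

lemma rpow_diff_le {α d u : ℝ} (hα : 0 < α) (hd : 0 < d) (hdu : d ≤ u) :
    d ^ (-α) - u ^ (-α) ≤ α * (u - d) * d ^ (-1 - α) := by
  rw [rpow_diff_eq_integral hα hd hdu]
  calc (∫ x in d..u, α * x ^ (-1 - α)) ≤ ∫ _x in d..u, α * d ^ (-1 - α) := by
        apply intervalIntegral.integral_mono_on hdu (cont_rpow_aux hd hdu)
          intervalIntegrable_const
        intro x hx
        have hx1 := hx.1
        exact mul_le_mul_of_nonneg_left
          (Real.rpow_le_rpow_of_nonpos hd hx1 (by linarith)) hα.le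
    _ = α * (u - d) * d ^ (-1 - α) := by rw [intervalIntegral.integral_const]; ring_nf

lemma rpow_diff_ge {α d u : ℝ} (hα : 0 < α) (hd : 0 < d) (hdu : d ≤ u) :
    α * (u - d) * u ^ (-1 - α) ≤ d ^ (-α) - u ^ (-α) := by
  rw [rpow_diff_eq_integral hα hd hdu]
  calc α * (u - d) * u ^ (-1 - α) = ∫ _x in d..u, α * u ^ (-1 - α) := by
        rw [intervalIntegral.integral_const, smul_eq_mul]; ring
    _ ≤ ∫ x in d..u, α * x ^ (-1 - α) := by
        apply intervalIntegral.integral_mono_on hdu intervalIntegrable_const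
          (cont_rpow_aux hd hdu)
        intro x hx
        exact mul_le_mul_of_nonneg_left
          (Real.rpow_le_rpow_of_nonpos (by linarith [hx.1]) hx.2 (by linarith)) hα.le

lemma rpow_diff_nonneg {α d u : ℝ} (hα : 0 < α) (hd : 0 < d) (hdu : d ≤ u) :
    u ^ (-α) ≤ d ^ (-α) := by
  nlinarith [rpow_diff_ge hα hd hdu, Real.rpow_nonneg (by linarith : (0:ℝ) ≤ u) (-1-α),
    mul_nonneg (mul_nonneg hα.le (by linarith : (0:ℝ) ≤ u - d)) (Real.rpow_nonneg (by linarith : (0:ℝ) ≤ u) (-1-α))]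

lemma sum_rpow_le {α : ℝ} (hα : 0 < α) (n : ℕ) :
    ∑ m ∈ Finset.range n, ((m : ℝ) + 1) ^ (-1 - α) ≤ 1 + 1 / α := by
  have key : ∀ n : ℕ, ∑ m ∈ Finset.range n, ((m : ℝ) + 1) ^ (-1 - α)
      ≤ 1 + (1 - (n : ℝ) ^ (-α)) / α := by
    intro n
    induction n with
    | zero =>
      simp only [Finset.range_zero, Finset.sum_empty, Nat.cast_zero,
        Real.zero_rpow (by linarith : -α ≠ 0)]
      positivity
      

    | succ n ih =>
      rw [Finset.sum_range_succ]
      rcases Nat.eq_zero_or_pos n with h0 | hpos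
      · subst h0; simp [Real.one_rpow]
      · have hn1 : (1:ℝ) ≤ (n:ℝ) := by exact_mod_cast hpos
        have hstep : ((n:ℝ) + 1) ^ (-1 - α) ≤ ((n:ℝ) ^ (-α) - ((n:ℝ)+1) ^ (-α)) / α := by
          have := rpow_diff_ge hα (by linarith : (0:ℝ) < (n:ℝ)) (by linarith : (n:ℝ) ≤ (n:ℝ)+1)
          rw [le_div_iff₀ hα]
          nlinarith
        have : (((n:ℕ):ℝ) + 1) = (((n+1:ℕ)):ℝ) := by push_cast; ring
        calc ∑ m ∈ Finset.range n, ((m : ℝ) + 1) ^ (-1 - α) + ((n:ℝ)+1) ^ (-1-α)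
            ≤ 1 + (1 - (n : ℝ) ^ (-α)) / α + ((n:ℝ) ^ (-α) - ((n:ℝ)+1) ^ (-α)) / α := by
              push_cast; linarith
          _ = 1 + (1 - (((n:ℕ):ℝ)+1) ^ (-α)) / α := by ring
          _ = 1 + (1 - (((n+1:ℕ)):ℝ) ^ (-α)) / α := by rw [this]
  calc ∑ m ∈ Finset.range n, ((m : ℝ) + 1) ^ (-1 - α) ≤ 1 + (1 - (n : ℝ) ^ (-α)) / α := key n
    _ ≤ 1 + 1 / α := by
        have : (0:ℝ) ≤ (n:ℝ) ^ (-α) := Real.rpow_nonneg (Nat.cast_nonneg n) _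
        have h2 : (1 - (n : ℝ) ^ (-α)) / α ≤ 1 / α := by
          exact div_le_div_of_nonneg_right (by linarith) hα.le
        linarith

lemma kernel_integrable {α : ℝ} (hα1 : α < 1) (c a b : ℝ) :
    IntervalIntegrable (fun s : ℝ => (c - s) ^ (-α)) volume a b := by
  have h := (intervalIntegrable_rpow' (a := c - a) (b := c - b)
    (r := -α) (by linarith)).comp_sub_left c
  simpa using h

lemma kernel_integral {α : ℝ} (hα : 0 < α) (hα1 : α < 1) {a b c : ℝ} (hab : a ≤ b) (hbc : b ≤ c) :
    ∫ s in a..b, (c - s) ^ (-α) = ((c - a) ^ (1 - α) - (c - b) ^ (1 - α)) / (1 - α) := by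
  rw [intervalIntegral.integral_comp_sub_left (fun x : ℝ => x ^ (-α)) c,
    integral_rpow (Or.inl (by linarith : (-1:ℝ) < -α))]
  have h1 : -α + 1 = 1 - α := by ring
  rw [h1]

end L1Helpers

/-- For `0 < α < 1` and `f` twice continuously differentiable on `[0,T]`, the L1 scheme
approximates the Caputo derivative with error `O(Δt^{2−α})`, uniformly over mesh points
`t^j = jΔt ≤ T`. -/
theorem l1_scheme_error (α T : ℝ) (hα : 0 < α) (hα1 : α < 1) (hT : 0 < T)
    (f : ℝ → ℝ) (hf : ContDiffOn ℝ 2 f (Set.Icc 0 T)) :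
    ∃ C : ℝ, 0 ≤ C ∧ ∀ Δt : ℝ, 0 < Δt → ∀ j : ℕ, 1 ≤ j → (j : ℝ) * Δt ≤ T →
      |l1Approx α Δt f j - caputoDeriv α f ((j : ℝ) * Δt)| ≤ C * Δt ^ (2 - α) := by
  have h1α : (0:ℝ) < 1 - α := by linarith
  set I := Set.Icc (0:ℝ) T with hI
  have hud : UniqueDiffOn ℝ I := uniqueDiffOn_Icc hT
  set φ : ℝ → ℝ := derivWithin f I with hφdef
  have h1 : ContDiffOn ℝ 1 φ I := hf.derivWithin hud (by norm_num)
  have hφc : ContinuousOn φ I := h1.continuousOn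
  have hφd : DifferentiableOn ℝ φ I := h1.differentiableOn (by norm_num)
  obtain ⟨M0, hM0⟩ := (isCompact_Icc (a := (0:ℝ)) (b := T)).exists_bound_of_continuousOn
      (h1.continuousOn_derivWithin hud le_rfl)
  set M := max M0 0 with hM
  have hM_nonneg : 0 ≤ M := le_max_right _ _
  have hlip : ∀ x ∈ I, ∀ y ∈ I, |φ y - φ x| ≤ M * |y - x| := by
    intro x hx y hy
    have := (convex_Icc (0:ℝ) T).norm_image_sub_le_of_norm_derivWithin_le (C := M) hφd
      (fun z hz => (hM0 z hz).trans (le_max_left _ _)) hx hy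
    simpa [Real.norm_eq_abs] using this
  have hΓpos : 0 < Real.Gamma (1 - α) := Real.Gamma_pos_of_pos h1α
  have hΓ2 : Real.Gamma (2 - α) = (1 - α) * Real.Gamma (1 - α) := by
    rw [show (2:ℝ) - α = (1 - α) + 1 by ring, Real.Gamma_add_one (by linarith)]
  refine ⟨(1 / Real.Gamma (1 - α)) * M * (1/(1-α) + 1 + α), by positivity, ?_⟩
  intro Δt hΔt j hj hjT
  set t : ℕ → ℝ := fun i => (i : ℝ) * Δt with ht
  have ht0 : t 0 = 0 := by simp [ht]
  have htmono : ∀ {i k : ℕ}, i ≤ k → t i ≤ t k := fun {i k} hik => by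
    simp only [ht]; exact mul_le_mul_of_nonneg_right (by exact_mod_cast hik) hΔt.le
  have htT : ∀ i ≤ j, t i ≤ T := fun i hij => le_trans (htmono hij) hjT
  have htsub : ∀ i : ℕ, t (i+1) - t i = Δt := fun i => by simp only [ht]; push_cast; ring
  have htnn : ∀ i : ℕ, 0 ≤ t i := fun i => by positivity
  have hstep : ∀ i : ℕ, t i ≤ t (i+1) := fun i => htmono (Nat.le_succ i)
  have hIcc : ∀ i, i < j → Set.Icc (t i) (t (i+1)) ⊆ I := by
    intro i hij x hx
    exact ⟨le_trans (htnn i) hx.1, le_trans hx.2 (htT (i+1) hij)⟩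
  set tj := t j with htj
  set K : ℝ → ℝ := fun s => (tj - s) ^ (-α) with hK
  -- FTC on subintervals
  have hφint : ∀ i, i < j → IntervalIntegrable φ volume (t i) (t (i+1)) := by
    intro i hij
    exact (hφc.mono (by rw [Set.uIcc_of_le (hstep i)]; exact hIcc i hij)).intervalIntegrable
  have hFTC : ∀ i, i < j → ∫ s in t i..t (i+1), φ s = f (t (i+1)) - f (t i) := by
    intro i hij
    apply intervalIntegral.integral_eq_sub_of_hasDeriv_right_of_le (hstep i)
      (hf.continuousOn.mono (hIcc i hij))
    · intro x hx
      have hx1 : 0 < x := lt_of_le_of_lt (htnn i) hx.1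
      have hx2 : x < T := lt_of_lt_of_le hx.2 (htT (i+1) hij)
      have hnh : I ∈ nhds x := by rw [hI]; exact Icc_mem_nhds hx1 hx2
      have hdx : DifferentiableAt ℝ f x :=
        ((hf.differentiableOn (by norm_num)) x ⟨hx1.le, hx2.le⟩).differentiableAt hnh
      have hφx : φ x = deriv f x := derivWithin_of_mem_nhds hnh
      rw [hφx]
      exact hdx.hasDerivAt.hasDerivWithinAt
    · exact hφint i hij
  -- kernel integrability and values
  have hKint : ∀ a b : ℝ, IntervalIntegrable K volume a b := fun a b =>
    kernel_integrable hα1 tj a b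
  have hKφint : ∀ i, i < j → IntervalIntegrable (fun s => K s * φ s) volume (t i) (t (i+1)) := by
    intro i hij
    exact (hKint _ _).mul_continuousOn
      (hφc.mono (by rw [Set.uIcc_of_le (hstep i)]; exact hIcc i hij))
  have hKval : ∀ i, i < j → ∫ s in t i..t (i+1), K s
      = ((tj - t i) ^ (1-α) - (tj - t (i+1)) ^ (1-α)) / (1-α) := by
    intro i hij
    exact kernel_integral hα hα1 (hstep i) (htmono hij)
  -- rewrite caputo with φ
  have hcap : caputoDeriv α f tj = (1 / Real.Gamma (1 - α)) * ∫ s in (0:ℝ)..tj, K s * φ s := by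
    rw [caputoDeriv]
    congr 1
    apply intervalIntegral.integral_congr_ae
    have hTnull : (volume : Measure ℝ) {T} = 0 := measure_singleton T
    filter_upwards [compl_mem_ae_iff.mpr hTnull] with x hx hmem
    rw [Set.uIoc_of_le (htnn j)] at hmem
    have hx1 : 0 < x := hmem.1
    have hx2 : x < T := lt_of_le_of_ne (le_trans hmem.2 (htT j le_rfl)) hx
    have hnh : I ∈ nhds x := by rw [hI]; exact Icc_mem_nhds hx1 hx2
    show (tj - x) ^ (-α) * deriv f x = K x * φ x
    rw [hK, hφdef, derivWithin_of_mem_nhds hnh]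
  -- split integral
  have hsplit : ∫ s in (0:ℝ)..tj, K s * φ s
      = ∑ i ∈ Finset.range j, ∫ s in t i..t (i+1), K s * φ s := by
    rw [show (0:ℝ) = t 0 from ht0.symm]
    exact (intervalIntegral.sum_integral_adjacent_intervals (fun k hk => hKφint k hk)).symm
  -- difference quotient
  set DQ : ℕ → ℝ := fun i => (f (t (i+1)) - f (t i)) / Δt with hDQdef
  -- l1Approx rewrite
  have hl1 : l1Approx α Δt f j = ∑ i ∈ Finset.range j,
      (1 / Real.Gamma (1 - α)) * (∫ s in t i..t (i+1), K s) * DQ i := by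
    unfold l1Approx
    rw [← Finset.sum_range_reflect (fun k => (Δt ^ (-α) / Real.Gamma (2 - α)) *
      (((k : ℝ) + 1) ^ (1 - α) - (k : ℝ) ^ (1 - α)) *
      (f (((j : ℝ) - k) * Δt) - f (((j : ℝ) - 1 - k) * Δt))) j]
    apply Finset.sum_congr rfl
    intro i hi
    rw [Finset.mem_range] at hi
    have hij : i + 1 ≤ j := hi
    have hc1 : ((j - 1 - i : ℕ) : ℝ) = (j : ℝ) - 1 - i := by
      have h : (j - 1 - i : ℕ) = j - (i + 1) := by omega
      rw [h, Nat.cast_sub hij]; push_cast; ring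
    simp only [hc1]
    have e1 : ((j:ℝ) - ((j:ℝ) - 1 - i)) * Δt = t (i+1) := by simp only [ht]; push_cast; ring
    have e2 : ((j:ℝ) - 1 - ((j:ℝ) - 1 - i)) * Δt = t i := by simp only [ht]; push_cast; ring
    have e5 : ((j:ℝ) - 1 - i) + 1 = (j:ℝ) - i := by ring
    have hji : (0:ℝ) ≤ (j:ℝ) - 1 - i := by
      have : ((i:ℝ)) + 1 ≤ (j:ℝ) := by exact_mod_cast hij
      linarith
    have e3 : tj - t i = ((j:ℝ) - i) * Δt := by simp only [htj, ht]; push_cast; ring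
    have e4 : tj - t (i+1) = ((j:ℝ) - 1 - i) * Δt := by simp only [htj, ht]; push_cast; ring
    rw [e1, e2, e5, hKval i hi, e3, e4,
      Real.mul_rpow (by linarith) hΔt.le, Real.mul_rpow hji hΔt.le]
    have hΔpow : Δt ^ ((1:ℝ) - α) = Δt ^ (-α) * Δt := by
      rw [show (1:ℝ) - α = -α + 1 by ring, Real.rpow_add hΔt, Real.rpow_one]
    simp only [hDQdef]
    rw [hΓ2, hΔpow]
    field_simp
  -- error representation
  set E : ℕ → ℝ := fun i => ∫ s in t i..t (i+1), K s * (DQ i - φ s) with hE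
  have hmain : l1Approx α Δt f j - caputoDeriv α f tj
      = (1 / Real.Gamma (1 - α)) * ∑ i ∈ Finset.range j, E i := by
    rw [hl1, hcap, hsplit, Finset.mul_sum, Finset.mul_sum, ← Finset.sum_sub_distrib]
    apply Finset.sum_congr rfl
    intro i hi
    rw [Finset.mem_range] at hi
    have hint1 : IntervalIntegrable (fun s => K s * DQ i) volume (t i) (t (i+1)) :=
      (hKint _ _).mul_const _
    have heq : (fun s => K s * (DQ i - φ s)) = fun s => K s * DQ i - K s * φ s := by
      funext s; ring
    have hEi : E i = (∫ s in t i..t (i+1), K s) * DQ i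
        - ∫ s in t i..t (i+1), K s * φ s := by
      simp only [hE]
      rw [heq, intervalIntegral.integral_sub hint1 (hKφint i hi),
        intervalIntegral.integral_mul_const]
    rw [hEi]; ring
  -- pointwise DQ bound
  have hDQb : ∀ i, i < j → ∀ s ∈ Set.Icc (t i) (t (i+1)), |DQ i - φ s| ≤ M * Δt := by
    intro i hij s hs
    have hsubI : Set.Icc (t i) (t (i+1)) ⊆ I := hIcc i hij
    have hsI : s ∈ I := hsubI hs
    have h3 := htsub i
    have hkey : |∫ u in t i..t (i+1), (φ u - φ s)| ≤ M * Δt * Δt := by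
      have hb : ∀ u ∈ Set.uIoc (t i) (t (i+1)), ‖φ u - φ s‖ ≤ M * Δt := by
        intro u hu
        rw [Set.uIoc_of_le (hstep i)] at hu
        have huI : u ∈ I := hsubI ⟨hu.1.le, hu.2⟩
        have h1 := hlip s hsI u huI
        have h2 : |u - s| ≤ Δt := by
          rw [abs_le]
          constructor
          · have := hs.2; have := hu.1; linarith
          · have := hs.1; have := hu.2; linarith
        calc ‖φ u - φ s‖ = |φ u - φ s| := rfl
          _ ≤ M * |u - s| := h1
          _ ≤ M * Δt := mul_le_mul_of_nonneg_left h2 hM_nonneg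
      have := intervalIntegral.norm_integral_le_of_norm_le_const (C := M * Δt)
        (f := fun u => φ u - φ s) (a := t i) (b := t (i+1)) hb
      rw [h3] at this
      calc |∫ u in t i..t (i+1), (φ u - φ s)| ≤ M * Δt * |Δt| := this
        _ = M * Δt * Δt := by rw [abs_of_pos hΔt]
    have h2 : ∫ u in t i..t (i+1), (φ u - φ s) = (f (t (i+1)) - f (t i)) - Δt * φ s := by
      rw [intervalIntegral.integral_sub (hφint i hij) intervalIntegrable_const,
        intervalIntegral.integral_const, hFTC i hij, h3, smul_eq_mul]
    have hrw : DQ i - φ s = (∫ u in t i..t (i+1), (φ u - φ s)) / Δt := by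
      rw [h2]; simp only [hDQdef]; field_simp
    rw [hrw, abs_div, abs_of_pos hΔt, div_le_iff₀ hΔt]
    calc |∫ u in t i..t (i+1), (φ u - φ s)| ≤ M * Δt * Δt := hkey
      _ = M * Δt * Δt := rfl
  -- bound on last interval
  have hpow2 : Δt ^ ((2:ℝ)-α) = Δt * Δt ^ ((1:ℝ)-α) := by
    rw [show (2:ℝ)-α = 1+(1-α) by ring, Real.rpow_add hΔt, Real.rpow_one]
  have hElast : ∀ i, i + 1 = j → |E i| ≤ M / (1-α) * Δt ^ (2-α) := by
    intro i hij1
    have hij : i < j := by omega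
    have htji : tj - t (i+1) = 0 := by rw [htj, ← hij1, sub_self]
    have htji2 : tj - t i = Δt := by rw [htj, ← hij1]; exact htsub i
    have hKnn : ∀ s ∈ Set.uIoc (t i) (t (i+1)), 0 ≤ K s := by
      intro s hs
      rw [Set.uIoc_of_le (hstep i)] at hs
      have hstj : s ≤ tj := by rw [htj, ← hij1]; exact hs.2
      exact Real.rpow_nonneg (by linarith) _
    have hb : ∀ᵐ s ∂(volume.restrict (Set.uIoc (t i) (t (i+1)))),
        ‖K s * (DQ i - φ s)‖ ≤ M * Δt * K s := by
      refine (ae_restrict_iff' measurableSet_uIoc).2 (ae_of_all _ ?_)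
      intro s hs
      have hs' := hs
      rw [Set.uIoc_of_le (hstep i)] at hs'
      have hdq := hDQb i hij s ⟨hs'.1.le, hs'.2⟩
      have hK0 := hKnn s hs
      calc ‖K s * (DQ i - φ s)‖ = K s * |DQ i - φ s| := by
            rw [norm_mul, Real.norm_eq_abs, Real.norm_eq_abs, abs_of_nonneg hK0]
        _ ≤ K s * (M * Δt) := mul_le_mul_of_nonneg_left hdq hK0
        _ = M * Δt * K s := by ring
    have h5 := intervalIntegral.norm_integral_le_abs_of_norm_le hb
      ((hKint (t i) (t (i+1))).const_mul (M*Δt))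
    have hval : ∫ s in t i..t (i+1), M * Δt * K s = M * Δt * (Δt ^ ((1:ℝ)-α) / (1-α)) := by
      rw [intervalIntegral.integral_const_mul, hKval i hij, htji, htji2,
        Real.zero_rpow (by linarith : (1:ℝ)-α ≠ 0)]
      ring
    calc |E i| ≤ |M * Δt * (Δt ^ ((1:ℝ)-α)/(1-α))| := by rw [← hval]; exact h5
      _ = M * Δt * (Δt ^ ((1:ℝ)-α)/(1-α)) := abs_of_nonneg (by positivity)
      _ = M / (1-α) * Δt ^ ((2:ℝ)-α) := by rw [hpow2]; ring
  -- bound on earlier intervals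
  have hEearly : ∀ i, i + 1 < j → |E i| ≤
      α * M * Δt ^ (2-α) * (((j - 2 - i : ℕ) : ℝ) + 1) ^ (-1-α) := by
    intro i hij1
    have hij : i < j := by omega
    set mr : ℝ := ((j - 2 - i : ℕ) : ℝ) + 1 with hmr
    have hmr1 : (1:ℝ) ≤ mr := by
      rw [hmr]
      have : (0:ℝ) ≤ ((j - 2 - i : ℕ) : ℝ) := Nat.cast_nonneg _
      linarith
    have hmrj : mr = (j:ℝ) - 1 - i := by
      simp only [hmr]
      have h : (j - 2 - i : ℕ) = j - (i + 2) := by omega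
      rw [h, Nat.cast_sub (by omega)]; push_cast; ring
    set d : ℝ := tj - t (i+1) with hd
    have hdm : d = mr * Δt := by simp only [hd, hmrj, htj, ht]; push_cast; ring
    have hdpos : 0 < d := by rw [hdm]; positivity
    have hzero : ∫ s in t i..t (i+1), (DQ i - φ s) = 0 := by
      rw [intervalIntegral.integral_sub intervalIntegrable_const (hφint i hij),
        intervalIntegral.integral_const, hFTC i hij, htsub i, smul_eq_mul]
      simp only [hDQdef]
      field_simp
      ring
    have hint2 : IntervalIntegrable (fun s => DQ i - φ s) volume (t i) (t (i+1)) :=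
      intervalIntegrable_const.sub (hφint i hij)
    have hint3 : IntervalIntegrable (fun s => K s * (DQ i - φ s)) volume (t i) (t (i+1)) := by
      have heq : (fun s => K s * (DQ i - φ s)) = fun s => K s * DQ i - K s * φ s :=
        funext fun s => by ring
      rw [heq]
      exact ((hKint _ _).mul_const _).sub (hKφint i hij)
    have hEc : E i = ∫ s in t i..t (i+1), (K s - d ^ (-α)) * (DQ i - φ s) := by
      have heq : (fun s => (K s - d ^ (-α)) * (DQ i - φ s))
          = fun s => K s * (DQ i - φ s) - d ^ (-α) * (DQ i - φ s) :=
        funext fun s => by ring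
      rw [hE]
      rw [heq, intervalIntegral.integral_sub hint3 (hint2.const_mul _),
        intervalIntegral.integral_const_mul, hzero, mul_zero, sub_zero]
    have hb2 : ∀ s ∈ Set.uIoc (t i) (t (i+1)),
        ‖(K s - d ^ (-α)) * (DQ i - φ s)‖ ≤ (α * Δt * d ^ (-1-α)) * (M * Δt) := by
      intro s hs
      rw [Set.uIoc_of_le (hstep i)] at hs
      have hdu : d ≤ tj - s := by simp only [hd]; linarith [hs.2]
      have hud2 : tj - s - d ≤ Δt := by
        simp only [hd]
        have := htsub i
        linarith [hs.1]
      have hK1 : |K s - d ^ (-α)| ≤ α * Δt * d ^ (-1-α) := by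
        have hKs : K s = (tj - s) ^ (-α) := rfl
        rw [hKs, abs_of_nonpos (by linarith [rpow_diff_nonneg hα hdpos hdu] :
          (tj - s) ^ (-α) - d ^ (-α) ≤ 0)]
        have h6 := rpow_diff_le hα hdpos hdu
        have hdnn : (0:ℝ) ≤ d ^ (-1-α) := Real.rpow_nonneg hdpos.le _
        have h7 : α * (tj - s - d) * d ^ (-1-α) ≤ α * Δt * d ^ (-1-α) :=
          mul_le_mul_of_nonneg_right (mul_le_mul_of_nonneg_left hud2 hα.le) hdnn
        linarith
      have hdq := hDQb i hij s ⟨hs.1.le, hs.2⟩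
      rw [norm_mul, Real.norm_eq_abs, Real.norm_eq_abs]
      apply mul_le_mul hK1 hdq (abs_nonneg _) (by positivity)
    have h5 := intervalIntegral.norm_integral_le_of_norm_le_const hb2
    rw [htsub i, abs_of_pos hΔt] at h5
    rw [hEc] at *
    calc |∫ s in t i..t (i+1), (K s - d ^ (-α)) * (DQ i - φ s)|
        ≤ α * Δt * d ^ (-1-α) * (M * Δt) * Δt := h5
      _ = α * M * Δt ^ ((2:ℝ)-α) * mr ^ (-1-α) := by
          rw [hdm, Real.mul_rpow (by linarith) hΔt.le,
            show (2:ℝ)-α = 3 + (-1-α) by ring, Real.rpow_add hΔt,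
            show ((3:ℝ)) = ((3:ℕ):ℝ) by norm_num, Real.rpow_natCast]
          ring
  -- assemble
  have hgoal : ((j:ℝ) * Δt) = tj := rfl
  rw [hgoal, hmain, abs_mul, abs_of_pos (by positivity : (0:ℝ) < 1/Real.Gamma (1-α))]
  obtain ⟨n, rfl⟩ : ∃ n, j = n + 1 := ⟨j - 1, by omega⟩
  have habs : |∑ i ∈ Finset.range (n+1), E i| ≤ ∑ i ∈ Finset.range (n+1), |E i| :=
    Finset.abs_sum_le_sum_abs _ _
  have hsum1 : ∑ i ∈ Finset.range n, |E i| ≤ α * M * Δt ^ ((2:ℝ)-α) * (1 + 1/α) := by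
    calc ∑ i ∈ Finset.range n, |E i|
        ≤ ∑ i ∈ Finset.range n, α * M * Δt ^ ((2:ℝ)-α) * (((n - 1 - i : ℕ) : ℝ) + 1) ^ (-1-α) := by
          apply Finset.sum_le_sum
          intro i hi
          rw [Finset.mem_range] at hi
          have h8 := hEearly i (by omega)
          rwa [show (n + 1 - 2 - i : ℕ) = n - 1 - i by omega] at h8
      _ = α * M * Δt ^ ((2:ℝ)-α)
          * ∑ i ∈ Finset.range n, (((n - 1 - i : ℕ) : ℝ) + 1) ^ (-1-α) := by
          rw [← Finset.mul_sum]
      _ = α * M * Δt ^ ((2:ℝ)-α) * ∑ m ∈ Finset.range n, ((m : ℝ) + 1) ^ (-1-α) := by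
          rw [Finset.sum_range_reflect (fun m => ((m : ℝ) + 1) ^ (-1-α)) n]
      _ ≤ α * M * Δt ^ ((2:ℝ)-α) * (1 + 1/α) := by
          apply mul_le_mul_of_nonneg_left (sum_rpow_le hα n) (by positivity)
  have hlastb := hElast n rfl
  have hstep2 : ∑ i ∈ Finset.range (n+1), |E i|
      ≤ α * M * Δt ^ ((2:ℝ)-α) * (1 + 1/α) + M/(1-α) * Δt ^ ((2:ℝ)-α) := by
    rw [Finset.sum_range_succ]
    linarith
  calc (1/Real.Gamma (1-α)) * |∑ i ∈ Finset.range (n+1), E i|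
      ≤ (1/Real.Gamma (1-α)) * (α * M * Δt ^ ((2:ℝ)-α) * (1 + 1/α) + M/(1-α) * Δt ^ ((2:ℝ)-α)) :=
        mul_le_mul_of_nonneg_left (habs.trans hstep2) (by positivity)
    _ = (1/Real.Gamma (1-α)) * M * (1/(1-α) + 1 + α) * Δt ^ ((2:ℝ)-α) := by
        field_simp
        ring
end

section
/- Let A and B be n × n real matrices. Then there exists a constant C ≥ 0 such that for all t ∈ [0, 1], ‖exp(t(A+B)) − exp((t/2)B) · exp(tA) · exp((t/2)B)‖ ≤ C t³, i.e. the Strang splitting has local error of order three (hence is a second-order method). -/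
open NormedSpace

attribute [local instance] Matrix.linftyOpNormedRing Matrix.linftyOpNormedAlgebra

/-- Strang splitting has local error of order three: for `n × n` real matrices `A`, `B`,
there is `C ≥ 0` with `‖exp(t(A+B)) − exp((t/2)B)·exp(tA)·exp((t/2)B)‖ ≤ C t³`
for all `t ∈ [0,1]`. -/
theorem strang_splitting_local_error (n : ℕ) (A B : Matrix (Fin n) (Fin n) ℝ) :
    ∃ C : ℝ, 0 ≤ C ∧ ∀ t ∈ Set.Icc (0 : ℝ) 1,
      ‖exp (t • (A + B)) - exp ((t / 2) • B) * exp (t • A) * exp ((t / 2) • B)‖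
        ≤ C * t ^ 3 := by
  set B₂ : Matrix (Fin n) (Fin n) ℝ := (2⁻¹ : ℝ) • B with hB₂
  have hB : B₂ + B₂ = B := by
    rw [hB₂, ← add_smul]; norm_num
  set u : ℝ → Matrix (Fin n) (Fin n) ℝ := fun t => exp (t • B₂) with hu
  set v : ℝ → Matrix (Fin n) (Fin n) ℝ := fun t => exp (t • A) with hv
  set w : ℝ → Matrix (Fin n) (Fin n) ℝ := fun t => exp (t • (A + B)) with hw
  set f : ℝ → Matrix (Fin n) (Fin n) ℝ := fun t => w t - u t * v t * u t with hf
  have key : ∀ t : ℝ, exp ((t / 2) • B) = u t := by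
    intro t
    show exp ((t / 2) • B) = exp (t • (2⁻¹ : ℝ) • B)
    rw [smul_smul, div_eq_mul_inv]
  -- smoothness
  have smoothexp : ∀ (M : Matrix (Fin n) (Fin n) ℝ),
      ContDiff ℝ 3 (fun t : ℝ => exp (t • M)) := by
    intro M
    rw [contDiff_iff_contDiffAt]
    intro x
    exact (NormedSpace.exp_analytic (x • M)).contDiffAt.comp x
      ((contDiff_id.smul contDiff_const).contDiffAt)
  have hfsmooth : ContDiff ℝ 3 f :=
    (smoothexp (A + B)).sub (((smoothexp B₂).mul (smoothexp A)).mul (smoothexp B₂))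
  -- derivatives
  have Hu : ∀ t, HasDerivAt u (B₂ * u t) t := fun t => hasDerivAt_exp_smul_const' B₂ t
  have Hv : ∀ t, HasDerivAt v (A * v t) t := fun t => hasDerivAt_exp_smul_const' A t
  have Hw : ∀ t, HasDerivAt w ((A + B) * w t) t := fun t => hasDerivAt_exp_smul_const' (A + B) t
  set S : ℝ → Matrix (Fin n) (Fin n) ℝ :=
    fun t => (B₂ * u t * v t + u t * (A * v t)) * u t + u t * v t * (B₂ * u t) with hS
  have Hf : ∀ t, HasDerivAt f ((A + B) * w t - S t) t := by
    intro t
    exact (Hw t).sub (((Hu t).mul (Hv t)).mul (Hu t))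
  have hderiv : deriv f = fun t => (A + B) * w t - S t :=
    funext fun t => (Hf t).deriv
  -- second derivative at each point
  have HS : ∀ t, HasDerivAt S
      (((B₂ * (B₂ * u t) * v t + B₂ * u t * (A * v t))
          + (B₂ * u t * (A * v t) + u t * (A * (A * v t)))) * u t
        + (B₂ * u t * v t + u t * (A * v t)) * (B₂ * u t)
        + ((B₂ * u t * v t + u t * (A * v t)) * (B₂ * u t)
            + u t * v t * (B₂ * (B₂ * u t)))) t := by
    intro t
    exact ((((((Hu t).const_mul B₂).mul (Hv t)).add ((Hu t).mul ((Hv t).const_mul A))).mul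
        (Hu t)).add (((Hu t).mul (Hv t)).mul ((Hu t).const_mul B₂)))
  have Hf2 : ∀ t, HasDerivAt (deriv f)
      ((A + B) * ((A + B) * w t)
        - (((B₂ * (B₂ * u t) * v t + B₂ * u t * (A * v t))
            + (B₂ * u t * (A * v t) + u t * (A * (A * v t)))) * u t
          + (B₂ * u t * v t + u t * (A * v t)) * (B₂ * u t)
          + ((B₂ * u t * v t + u t * (A * v t)) * (B₂ * u t)
              + u t * v t * (B₂ * (B₂ * u t))))) t := by
    intro t
    rw [hderiv]
    exact ((Hw t).const_mul (A + B)).sub (HS t)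
  -- values at 0
  have hu0 : u 0 = 1 := by rw [hu]; simp [exp_zero]
  have hv0 : v 0 = 1 := by rw [hv]; simp [exp_zero]
  have hw0 : w 0 = 1 := by rw [hw]; simp [exp_zero]
  have hf0 : f 0 = 0 := by rw [hf]; simp [hu0, hv0, hw0]
  have hf'0 : deriv f 0 = 0 := by
    rw [hderiv]
    simp only [hS, hu0, hv0, hw0, mul_one, one_mul]
    rw [← hB]; noncomm_ring
  have hf''0 : deriv (deriv f) 0 = 0 := by
    refine (Hf2 0).deriv.trans ?_
    simp only [hu0, hv0, hw0, mul_one, one_mul]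
    rw [← hB]; noncomm_ring
  -- iterated derivatives within Icc 0 1 at 0 vanish
  set s : Set ℝ := Set.Icc (0 : ℝ) 1 with hs
  have hud : UniqueDiffOn ℝ s := uniqueDiffOn_Icc one_pos
  have h0s : (0 : ℝ) ∈ s := by constructor <;> norm_num
  have hdw : Set.EqOn (derivWithin f s) (deriv f) s := fun x hx =>
    (Hf x).hasDerivWithinAt.derivWithin (hud x hx) ▸ (Hf x).deriv ▸ rfl
  have hiter0 : iteratedDerivWithin 0 f s 0 = 0 := by
    simpa [iteratedDerivWithin_zero] using hf0
  have hiter1 : iteratedDerivWithin 1 f s 0 = 0 := by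
    rw [iteratedDerivWithin_one,
      (Hf 0).hasDerivWithinAt.derivWithin (hud 0 h0s)]
    simp only [hS, hu0, hv0, hw0, mul_one, one_mul]
    rw [← hB]; noncomm_ring
  have heq1 : Set.EqOn (iteratedDerivWithin 1 f s) (deriv f) s := fun x hx =>
    (congrFun iteratedDerivWithin_one x).trans (hdw hx)
  have hiter2 : iteratedDerivWithin 2 f s 0 = 0 := by
    rw [iteratedDerivWithin_succ,
      derivWithin_congr heq1 (heq1 h0s),
      (Hf2 0).hasDerivWithinAt.derivWithin (hud 0 h0s)]
    simp only [hu0, hv0, hw0, mul_one, one_mul]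
    rw [← hB]; noncomm_ring
  have htaylor : ∀ t : ℝ, taylorWithinEval f 2 s 0 t = 0 := by
    intro t
    rw [taylor_within_apply]
    simp [Finset.sum_range_succ, hiter0, hiter1, hiter2]
  have hfOn : ContDiffOn ℝ ((2 : ℕ) + 1) f s := hfsmooth.contDiffOn
  obtain ⟨C, hC⟩ := exists_taylor_mean_remainder_bound (n := 2) zero_le_one hfOn
  refine ⟨max C 0, le_max_right _ _, ?_⟩
  intro t ht
  have hrw : exp (t • (A + B)) - exp ((t / 2) • B) * exp (t • A) * exp ((t / 2) • B)
      = f t := by rw [key t]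
  have h1 := hC t ht
  rw [htaylor t] at h1
  rw [hrw]
  calc ‖f t‖ ≤ C * t ^ 3 := by simpa using h1
    _ ≤ max C 0 * t ^ 3 :=
      mul_le_mul_of_nonneg_right (le_max_left _ _) (pow_nonneg ht.1 3)
end

section
/- Let A and B be n × n real matrices and T > 0. Then there exists a constant C ≥ 0 such that for every integer n ≥ 1 and every step size Δt > 0 with nΔt ≤ T, ‖(exp(ΔtA) · exp(ΔtB))^n − exp(nΔt(A+B))‖ ≤ C Δt; i.e. the Lie splitting scheme has global error of first order on [0, T]. -/
open NormedSpace

attribute [local instance] Matrix.linftyOpNormedRing Matrix.linftyOpNormedAlgebra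

open Nat

section Aux

variable {𝔸 : Type*} [NormedRing 𝔸] [NormedAlgebra ℝ 𝔸] [CompleteSpace 𝔸] [NormOneClass 𝔸]

lemma my_norm_exp_le (x : 𝔸) : ‖exp x‖ ≤ Real.exp ‖x‖ := by
  simp only [exp_eq_tsum ℝ]
  calc ‖(∑' (n : ℕ), ((n ! : ℝ)⁻¹) • x ^ n)‖ ≤ ∑' (n : ℕ), ‖((n ! : ℝ)⁻¹) • x ^ n‖ :=
        norm_tsum_le_tsum_norm (norm_expSeries_summable' x)
    _ ≤ ∑' (n : ℕ), ‖x‖ ^ n / n ! := by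
        refine Summable.tsum_le_tsum (fun n => ?_) (norm_expSeries_summable' x)
          (Real.summable_pow_div_factorial ‖x‖)
        rw [norm_smul, norm_inv, Real.norm_natCast, div_eq_inv_mul]
        exact mul_le_mul_of_nonneg_left (norm_pow_le x n) (by positivity)
    _ = Real.exp ‖x‖ := by
        rw [Real.exp_eq_exp_ℝ, exp_eq_tsum_div]

lemma my_exp_remainder (x : 𝔸) : ‖exp x - 1 - x‖ ≤ ‖x‖ ^ 2 * Real.exp ‖x‖ := by
  have hs : Summable (fun n : ℕ => ((n ! : ℝ)⁻¹) • x ^ n) := expSeries_summable' x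
  have hrw : exp x - 1 - x = ∑' (n : ℕ), (((n + 2)! : ℝ)⁻¹) • x ^ (n + 2) := by
    have h0 := Summable.tsum_eq_zero_add hs
    have h1 := Summable.tsum_eq_zero_add (hs.comp_injective (add_left_injective 1))
    simp only [Function.comp] at h1
    rw [exp_eq_tsum ℝ]
    simp only [h0, h1]
    simp [Nat.factorial]
  rw [hrw]
  have hsn : Summable (fun n : ℕ => ‖(((n + 2)! : ℝ)⁻¹) • x ^ (n + 2)‖) := by
    have := (norm_expSeries_summable' (𝕂 := ℝ) x).comp_injective (add_left_injective 2)
    simpa [Function.comp_def] using this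
  calc ‖(∑' (n : ℕ), (((n + 2)! : ℝ)⁻¹) • x ^ (n + 2))‖
      ≤ ∑' (n : ℕ), ‖(((n + 2)! : ℝ)⁻¹) • x ^ (n + 2)‖ := norm_tsum_le_tsum_norm hsn
    _ ≤ ∑' (n : ℕ), ‖x‖ ^ 2 * (‖x‖ ^ n / n !) := by
        refine Summable.tsum_le_tsum (fun n => ?_) hsn
          ((Real.summable_pow_div_factorial ‖x‖).mul_left _)
        rw [norm_smul, norm_inv, Real.norm_natCast]
        have h1 : ‖x ^ (n + 2)‖ ≤ ‖x‖ ^ (n + 2) := norm_pow_le x (n + 2)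
        have h2 : (n ! : ℝ) ≤ ((n + 2)! : ℝ) := by
          exact_mod_cast Nat.factorial_le (by omega)
        have h3 : (0:ℝ) < n ! := by positivity
        have h4 : (0:ℝ) < ((n + 2)! : ℝ) := by positivity
        calc (((n + 2)! : ℝ))⁻¹ * ‖x ^ (n + 2)‖ ≤ (((n + 2)! : ℝ))⁻¹ * ‖x‖ ^ (n + 2) := by
              gcongr
          _ ≤ (n ! : ℝ)⁻¹ * ‖x‖ ^ (n + 2) := by gcongr
          _ = ‖x‖ ^ 2 * (‖x‖ ^ n / n !) := by ring
    _ = ‖x‖ ^ 2 * Real.exp ‖x‖ := by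
        rw [tsum_mul_left, Real.exp_eq_exp_ℝ, exp_eq_tsum_div]

lemma my_pow_sub_pow {R : Type*} [NormedRing R] [NormOneClass R] (x y : R) {ρ : ℝ}
    (hρ : 1 ≤ ρ) (hx : ‖x‖ ≤ ρ) (hy : ‖y‖ ≤ ρ) (n : ℕ) :
    ‖x ^ n - y ^ n‖ ≤ n * ρ ^ n * ‖x - y‖ := by
  induction n with
  | zero => simp
  | succ n ih =>
    have hkey : x ^ (n + 1) - y ^ (n + 1) = x ^ n * (x - y) + (x ^ n - y ^ n) * y := by
      rw [pow_succ, pow_succ]; noncomm_ring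
    have hρ0 : (0:ℝ) ≤ ρ := le_trans zero_le_one hρ
    have hρn : (0:ℝ) ≤ ρ ^ n := pow_nonneg hρ0 n
    have hxn : ‖x ^ n‖ ≤ ρ ^ n := (norm_pow_le x n).trans (pow_le_pow_left₀ (norm_nonneg _) hx n)
    calc ‖x ^ (n + 1) - y ^ (n + 1)‖ ≤ ‖x ^ n * (x - y)‖ + ‖(x ^ n - y ^ n) * y‖ := by
          rw [hkey]; exact norm_add_le _ _
      _ ≤ ‖x ^ n‖ * ‖x - y‖ + ‖x ^ n - y ^ n‖ * ‖y‖ := by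
          gcongr <;> [exact norm_mul_le _ _; exact norm_mul_le _ _]
      _ ≤ ρ ^ n * ‖x - y‖ + (n * ρ ^ n * ‖x - y‖) * ρ := by
          gcongr
      _ ≤ (n + 1 : ℕ) * ρ ^ (n + 1) * ‖x - y‖ := by
          have h1 : ρ ^ n ≤ ρ ^ (n + 1) := pow_le_pow_right₀ hρ (by omega)
          have h2 : ρ ^ (n + 1) = ρ ^ n * ρ := pow_succ ρ n
          have h4 : ρ ^ n * ‖x - y‖ ≤ ρ ^ n * ρ * ‖x - y‖ := by
            nlinarith [norm_nonneg (x - y)]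
          rw [h2]
          push_cast
          linarith [h4]


set_option maxHeartbeats 1000000 in
lemma lie_splitting_abstract (A B : 𝔸) (T : ℝ) (hT : 0 < T) :
    ∃ C : ℝ, 0 ≤ C ∧ ∀ n : ℕ, 1 ≤ n → ∀ Δt : ℝ, 0 < Δt → (n : ℝ) * Δt ≤ T →
      ‖(exp (Δt • A) * exp (Δt • B)) ^ n - exp (((n : ℝ) * Δt) • (A + B))‖
        ≤ C * Δt := by
  set nA := ‖A‖ with hnA
  set nB := ‖B‖ with hnB
  set M := nA + nB with hM
  set K := nA ^ 2 * Real.exp (T * M) + (1 + T * nA) * (nB ^ 2 * Real.exp (T * nB))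
    + nA * nB + M ^ 2 * Real.exp (T * M) with hK
  have hnA0 : 0 ≤ nA := norm_nonneg A
  have hnB0 : 0 ≤ nB := norm_nonneg B
  have hM0 : 0 ≤ M := by positivity
  have hK0 : 0 ≤ K := by positivity
  refine ⟨Real.exp (T * M) * K * T, by positivity, fun n hn Δt hΔt hnT => ?_⟩
  have hΔT : Δt ≤ T := by
    have h1n : (1 : ℝ) ≤ (n : ℝ) := by exact_mod_cast hn
    nlinarith
  set a := Δt • A with ha
  set b := Δt • B with hb
  have hna : ‖a‖ = Δt * nA := by rw [ha, norm_smul, Real.norm_eq_abs, abs_of_pos hΔt]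
  have hnb : ‖b‖ = Δt * nB := by rw [hb, norm_smul, Real.norm_eq_abs, abs_of_pos hΔt]
  have hnab : ‖Δt • (A + B)‖ ≤ Δt * M := by
    rw [norm_smul, Real.norm_eq_abs, abs_of_pos hΔt]
    exact mul_le_mul_of_nonneg_left (norm_add_le A B) hΔt.le
  have hpow : exp (((n : ℝ) * Δt) • (A + B)) = (exp (Δt • (A + B))) ^ n := by
    let +nondep : NormedAlgebra ℚ 𝔸 := .restrictScalars ℚ ℝ 𝔸
    rw [← exp_nsmul, ← Nat.cast_smul_eq_nsmul ℝ n (Δt • (A + B)), smul_smul]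
  rw [hpow]
  set S := exp a * exp b with hS
  set E := exp (Δt • (A + B)) with hE
  set ρ := Real.exp (Δt * M) with hρ
  have hρ1 : 1 ≤ ρ := Real.one_le_exp (by positivity)
  have hSρ : ‖S‖ ≤ ρ := by
    calc ‖S‖ ≤ ‖exp a‖ * ‖exp b‖ := norm_mul_le _ _
      _ ≤ Real.exp ‖a‖ * Real.exp ‖b‖ := by
          gcongr
          all_goals exact my_norm_exp_le _
      _ = ρ := by rw [hna, hnb, ← Real.exp_add, hρ, hM]; ring_nf
  have hEρ : ‖E‖ ≤ ρ := by
    calc ‖E‖ ≤ Real.exp ‖Δt • (A + B)‖ := my_norm_exp_le _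
      _ ≤ ρ := Real.exp_le_exp.mpr hnab
  have hkey : S - E = (exp a - 1 - a) * exp b + (1 + a) * (exp b - 1 - b) + a * b
      - (exp (a + b) - 1 - (a + b)) := by
    have hab : a + b = Δt • (A + B) := by rw [ha, hb, smul_add]
    rw [hS, hE, ← hab]
    noncomm_ring
  have hra : ‖exp a - 1 - a‖ ≤ (Δt * nA) ^ 2 * Real.exp (Δt * nA) := by
    have h := my_exp_remainder a
    rwa [hna] at h
  have hrb : ‖exp b - 1 - b‖ ≤ (Δt * nB) ^ 2 * Real.exp (Δt * nB) := by
    have h := my_exp_remainder b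
    rwa [hnb] at h
  have hrab : ‖exp (a + b) - 1 - (a + b)‖ ≤ (Δt * M) ^ 2 * Real.exp (Δt * M) := by
    have hab : a + b = Δt • (A + B) := by rw [ha, hb, smul_add]
    refine (my_exp_remainder (a + b)).trans ?_
    rw [hab]
    gcongr
    all_goals exact hnab
  have hlocal : ‖S - E‖ ≤ K * Δt ^ 2 := by
    rw [hkey]
    have h1 : ‖(exp a - 1 - a) * exp b‖ ≤ nA ^ 2 * Real.exp (T * M) * Δt ^ 2 := by
      calc ‖(exp a - 1 - a) * exp b‖ ≤ ‖exp a - 1 - a‖ * ‖exp b‖ := norm_mul_le _ _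
        _ ≤ ((Δt * nA) ^ 2 * Real.exp (Δt * nA)) * Real.exp ‖b‖ := by
            gcongr
            all_goals first
              | exact hra
              | exact my_norm_exp_le _
        _ ≤ ((Δt * nA) ^ 2 * Real.exp (T * nA)) * Real.exp (T * nB) := by
            rw [hnb]
            gcongr
            all_goals nlinarith
        _ = nA ^ 2 * (Real.exp (T * nA) * Real.exp (T * nB)) * Δt ^ 2 := by ring
        _ = nA ^ 2 * Real.exp (T * M) * Δt ^ 2 := by
            rw [← Real.exp_add, hM]; ring_nf
    have h2 : ‖(1 + a) * (exp b - 1 - b)‖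
        ≤ (1 + T * nA) * (nB ^ 2 * Real.exp (T * nB)) * Δt ^ 2 := by
      calc ‖(1 + a) * (exp b - 1 - b)‖ ≤ ‖(1 : 𝔸) + a‖ * ‖exp b - 1 - b‖ := norm_mul_le _ _
        _ ≤ (1 + Δt * nA) * ((Δt * nB) ^ 2 * Real.exp (Δt * nB)) := by
            gcongr
            all_goals first
              | exact (norm_add_le _ _).trans (by rw [norm_one, hna])
              | exact hrb
        _ ≤ (1 + T * nA) * ((Δt * nB) ^ 2 * Real.exp (T * nB)) := by
            gcongr
            all_goals nlinarith
        _ = (1 + T * nA) * (nB ^ 2 * Real.exp (T * nB)) * Δt ^ 2 := by ring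
    have h3 : ‖a * b‖ ≤ nA * nB * Δt ^ 2 := by
      calc ‖a * b‖ ≤ ‖a‖ * ‖b‖ := norm_mul_le _ _
        _ = nA * nB * Δt ^ 2 := by rw [hna, hnb]; ring
    have h4 : ‖exp (a + b) - 1 - (a + b)‖ ≤ M ^ 2 * Real.exp (T * M) * Δt ^ 2 := by
      refine hrab.trans ?_
      have hee : Real.exp (Δt * M) ≤ Real.exp (T * M) := by
        apply Real.exp_le_exp.mpr; nlinarith
      calc (Δt * M) ^ 2 * Real.exp (Δt * M) ≤ (Δt * M) ^ 2 * Real.exp (T * M) := by gcongr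
        _ = M ^ 2 * Real.exp (T * M) * Δt ^ 2 := by ring
    calc ‖(exp a - 1 - a) * exp b + (1 + a) * (exp b - 1 - b) + a * b
          - (exp (a + b) - 1 - (a + b))‖
        ≤ ‖(exp a - 1 - a) * exp b + (1 + a) * (exp b - 1 - b) + a * b‖
          + ‖exp (a + b) - 1 - (a + b)‖ := norm_sub_le _ _
      _ ≤ (‖(exp a - 1 - a) * exp b + (1 + a) * (exp b - 1 - b)‖ + ‖a * b‖)
          + ‖exp (a + b) - 1 - (a + b)‖ := by
            gcongr
            all_goals exact norm_add_le _ _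
      _ ≤ ((‖(exp a - 1 - a) * exp b‖ + ‖(1 + a) * (exp b - 1 - b)‖) + ‖a * b‖)
          + ‖exp (a + b) - 1 - (a + b)‖ := by
            gcongr
            all_goals exact norm_add_le _ _
      _ ≤ K * Δt ^ 2 := by rw [hK]; nlinarith [h1, h2, h3, h4]
  calc ‖S ^ n - E ^ n‖ ≤ n * ρ ^ n * ‖S - E‖ := my_pow_sub_pow S E hρ1 hSρ hEρ n
    _ ≤ n * ρ ^ n * (K * Δt ^ 2) := by gcongr
    _ = ρ ^ n * K * (((n : ℝ) * Δt) * Δt) := by ring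
    _ ≤ Real.exp (T * M) * K * (T * Δt) := by
        have hρn : ρ ^ n = Real.exp ((n : ℝ) * (Δt * M)) := by
          rw [hρ, ← Real.exp_nat_mul]
        have h5 : ρ ^ n ≤ Real.exp (T * M) := by
          rw [hρn]
          apply Real.exp_le_exp.mpr
          nlinarith
        gcongr
        all_goals first
          | exact h5
          | nlinarith
    _ = Real.exp (T * M) * K * T * Δt := by ring

end Aux

set_option maxHeartbeats 1000000 in
/-- The Lie splitting scheme has global first-order error on `[0, T]`: for `n × n` real
matrices `A`, `B` and `T > 0`, there is `C ≥ 0` such that for every `n ≥ 1` and `Δt > 0`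
with `nΔt ≤ T`, `‖(exp(ΔtA)·exp(ΔtB))^n − exp(nΔt(A+B))‖ ≤ C Δt`. -/
theorem lie_splitting_global_error (d : ℕ) (A B : Matrix (Fin d) (Fin d) ℝ) (T : ℝ)
    (hT : 0 < T) :
    ∃ C : ℝ, 0 ≤ C ∧ ∀ n : ℕ, 1 ≤ n → ∀ Δt : ℝ, 0 < Δt → (n : ℝ) * Δt ≤ T →
      ‖(exp (Δt • A) * exp (Δt • B)) ^ n - exp (((n : ℝ) * Δt) • (A + B))‖
        ≤ C * Δt := by
  rcases Nat.eq_zero_or_pos d with rfl | hd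
  · refine ⟨1, zero_le_one, fun n hn Δt hΔt hnT => ?_⟩
    rw [Subsingleton.elim ((exp (Δt • A) * exp (Δt • B)) ^ n)
      (exp (((n : ℝ) * Δt) • (A + B))), sub_self, norm_zero]
    positivity
  haveI : Nonempty (Fin d) := ⟨⟨0, hd⟩⟩
  exact lie_splitting_abstract A B T hT
end
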